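/- Let G = K ∪ S, where K is a complete graph on a countably infinite vertex set and S is a star of countably infinitely many rays whose center is a vertex v₀ ∈ V(K). Let r be a ray contained in K. Then t(G) = V(G) ∖ V(K), ∂t_{t(G)} ⊆ t(G), the singleton {[r]} equals the basic open set Ω({v₀}, [r]) and hence is open in Ω(G), yet its image {[r]_{t(G)}} under the canonical map π_Ω : Ω(G) → Ω_t(G), [s] ↦ [s]_{t(G)}, is not open in Ω_t(G): for every finite F ⊆ t(G), the basic open set Ω_t(F, [r]_{t(G)}) contains infinitely many timid-ends of rays of S. In particular, π_Ω is not an open map. -/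

import Mathlib

open SimpleGraph

/-- A ray in a simple graph: an injective sequence of successively adjacent vertices. -/
structure GraphRay {V : Type*} (G : SimpleGraph V) where
  toFun : ℕ → V
  injective : Function.Injective toFun
  adj : ∀ n, G.Adj (toFun n) (toFun (n + 1))

/-- `u` and `v` are connected by a walk of `G` avoiding the vertex set `F`
(i.e. they lie in the same connected component of `G − F`). -/
def ReachAvoiding {V : Type*} (G : SimpleGraph V) (F : Set V) (u v : V) : Prop :=
  ∃ w : G.Walk u v, ∀ x ∈ w.support, x ∉ F

/-- `r` and `r'` have tails lying in the same connected component of `G − F`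
(deletion of the vertex set `F`). -/
def TailsConnected {V : Type*} (G : SimpleGraph V) (F : Set V) (r r' : ℕ → V) : Prop :=
  ∃ k k', (∀ n, k ≤ n → r n ∉ F) ∧ (∀ n, k' ≤ n → r' n ∉ F) ∧
    ReachAvoiding G F (r k) (r' k')

/-- `r` and `r'` have tails lying in the same connected component of `G − F`
(deletion of the edge set `F`). -/
def EdgeTailsConnected {V : Type*} (G : SimpleGraph V) (F : Set (Sym2 V)) (r r' : ℕ → V) : Prop :=
  ∃ k k', (∀ n, k ≤ n → s(r n, r (n + 1)) ∉ F) ∧ (∀ n, k' ≤ n → s(r' n, r' (n + 1)) ∉ F) ∧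
    (G.deleteEdges F).Reachable (r k) (r' k')

/-- `v` dominates the ray `r`: for every finite vertex set `F` not containing `v`,
`v` and some tail of `r` lie in the same connected component of `G − F`. -/
def Dominates {V : Type*} (G : SimpleGraph V) (v : V) (r : ℕ → V) : Prop :=
  ∀ F : Finset V, v ∉ F →
    ∃ k, (∀ n, k ≤ n → r n ∉ (F : Set V)) ∧ ReachAvoiding G (F : Set V) v (r k)

/-- A vertex is timid if it dominates no ray. -/
def Timid {V : Type*} (G : SimpleGraph V) (v : V) : Prop :=
  ∀ r : GraphRay G, ¬ Dominates G v r.toFun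

/-- `t(G)`, the set of timid vertices of `G`. -/
def timidSet {V : Type*} (G : SimpleGraph V) : Set V := {v | Timid G v}

/-- Edge-equivalence of rays: no finite set of edges of `G` separates their tails. -/
def EdgeEquiv {V : Type*} (G : SimpleGraph V) (r r' : GraphRay G) : Prop :=
  ∀ F : Finset (Sym2 V), (F : Set (Sym2 V)) ⊆ G.edgeSet →
    EdgeTailsConnected G (F : Set (Sym2 V)) r.toFun r'.toFun

/-- `U`-equivalence of rays: no finite subset of `U` separates their tails. -/
def UEquiv {V : Type*} (G : SimpleGraph V) (U : Set V) (r r' : GraphRay G) : Prop :=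
  ∀ F : Finset V, (F : Set V) ⊆ U → TailsConnected G (F : Set V) r.toFun r'.toFun

/-- The `U`-end space: the quotient of the rays of `G` by `U`-equivalence. -/
def OmegaU {V : Type*} (G : SimpleGraph V) (U : Set V) := Quot (UEquiv G U)

/-- The basic open subset `Ω_U(F, ε)` of the `U`-end space. -/
def uBasic {V : Type*} (G : SimpleGraph V) (U : Set V) (F : Finset V) (ε : OmegaU G U) :
    Set (OmegaU G U) :=
  {ξ | ∃ r r' : GraphRay G, Quot.mk (UEquiv G U) r = ε ∧ Quot.mk (UEquiv G U) r' = ξ ∧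
    TailsConnected G (F : Set V) r.toFun r'.toFun}

instance {V : Type*} (G : SimpleGraph V) (U : Set V) : TopologicalSpace (OmegaU G U) :=
  TopologicalSpace.generateFrom
    {S | ∃ F : Finset V, (F : Set V) ⊆ U ∧ ∃ ε : OmegaU G U, S = uBasic G U F ε}

/-- The edge-end space: the quotient of the rays of `G` by edge-equivalence. -/
def OmegaE {V : Type*} (G : SimpleGraph V) := Quot (EdgeEquiv G)

/-- The basic open subset `Ω_E(F, ε)` of the edge-end space, for a finite edge set `F`. -/
def eBasic {V : Type*} (G : SimpleGraph V) (F : Finset (Sym2 V)) (ε : OmegaE G) :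
    Set (OmegaE G) :=
  {ξ | ∃ r r' : GraphRay G, Quot.mk (EdgeEquiv G) r = ε ∧ Quot.mk (EdgeEquiv G) r' = ξ ∧
    EdgeTailsConnected G (F : Set (Sym2 V)) r.toFun r'.toFun}

instance {V : Type*} (G : SimpleGraph V) : TopologicalSpace (OmegaE G) :=
  TopologicalSpace.generateFrom
    {S | ∃ F : Finset (Sym2 V), (F : Set (Sym2 V)) ⊆ G.edgeSet ∧
      ∃ ε : OmegaE G, S = eBasic G F ε}
/-- `v` is `U`-timid: for every ray `r` there is a finite `F ⊆ U ∖ {v}` such that no tail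
of `r` lies in the connected component of `v` in `G − F`. -/
def UTimid {V : Type*} (G : SimpleGraph V) (U : Set V) (v : V) : Prop :=
  ∀ r : GraphRay G, ∃ F : Finset V, (F : Set V) ⊆ U \ {v} ∧
    ∀ k, (∀ n, k ≤ n → r.toFun n ∉ (F : Set V)) → ¬ ReachAvoiding G (F : Set V) v (r.toFun k)

/-- `v` is `U`-dense: for every finite `F ⊆ U ∖ {v}`, the connected component of `v` in
`G − F` is infinite. -/
def UDense {V : Type*} (G : SimpleGraph V) (U : Set V) (v : V) : Prop :=
  ∀ F : Finset V, (F : Set V) ⊆ U \ {v} → {w | ReachAvoiding G (F : Set V) v w}.Infinite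

/-- `∂t_U`: the set of vertices of `G` that are both `U`-timid and `U`-dense. -/
def timidBoundary {V : Type*} (G : SimpleGraph V) (U : Set V) : Set V :=
  {v | UTimid G U v ∧ UDense G U v}
/-- The graph `K ∪ S`: a countably infinite clique `K` on the `Sum.inl` vertices together
with a star `S` of countably many rays (the `Sum.inr` vertices) whose center is the clique
vertex `v₀ = Sum.inl 0`: `inr (i, 0), inr (i, 1), …` is the `i`-th ray of the star, and
`inr (i, 0)` is adjacent to `v₀`. -/
def cliqueStar : SimpleGraph (ℕ ⊕ (ℕ × ℕ)) where
  Adj x y :=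
    match x, y with
    | Sum.inl a, Sum.inl b => a ≠ b
    | Sum.inl a, Sum.inr p => a = 0 ∧ p.2 = 0
    | Sum.inr p, Sum.inl a => a = 0 ∧ p.2 = 0
    | Sum.inr p, Sum.inr q => p.1 = q.1 ∧ (p.2 = q.2 + 1 ∨ q.2 = p.2 + 1)
  symm := by
    constructor
    rintro (a | p) (b | q) h
    · exact h.symm
    · exact h
    · exact h
    · exact ⟨h.1.symm, h.2.symm⟩
  loopless := by
    constructor
    rintro (a | p) h
    · exact h rfl
    · omega
/-- A ray lying inside the clique `K`. -/
def cliqueRay : GraphRay cliqueStar :=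
  ⟨fun n => Sum.inl n, fun a b h => Sum.inl.inj h, fun n => Nat.ne_of_lt (Nat.lt_succ_self n)⟩

/-- The canonical map `π_Ω : Ω(G) → Ω_t(G)`, `[s] ↦ [s]_{t(G)}`. -/
def piOmega {V : Type*} (G : SimpleGraph V) :
    OmegaU G (Set.univ : Set V) → OmegaU G (timidSet G) :=
  Quot.lift (fun r => Quot.mk (UEquiv G (timidSet G)) r)
    (fun _ _ h => Quot.sound (fun F _ => h F (Set.subset_univ _)))

/-!
Every vertex `(i, n)` of the star is timid: deleting `v₀` and `(i, n + 1)` cuts it off into a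
finite component. A clique vertex dominates the clique ray, and it is not timid even relative to
`t(G)`, because no set of star vertices separates it from that ray. Deleting `v₀` isolates the
clique `K − v₀` from all star rays, so only rays with a tail in `K` share a basic neighbourhood
with `[r]` in `Ω(G)`, and all of them are equivalent to `r`. In `Ω_t(G)` the vertex `v₀` may no
longer be deleted: a finite set of star vertices meets only finitely many rays of the star, and
every other star ray is joined to `r` through `v₀`. Hence the pairwise distinct ends of the star
rays converge to `[r]_{t(G)}` along the cofinite filter, so that `{[r]_{t(G)}}` is not open.
-/

open Filter

/-- For `C` disjoint from `F`: `C` is a union of connected components of `G − F`. -/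
def AdjClosedOutside {V : Type*} (G : SimpleGraph V) (F C : Set V) : Prop :=
  ∀ x ∈ C, ∀ y, G.Adj x y → y ∉ F → y ∈ C

section Rays

variable {V : Type*} {G : SimpleGraph V} {F C U : Set V}

namespace ReachAvoiding

variable {u v w : V}

lemma refl (hu : u ∉ F) : ReachAvoiding G F u u :=
  ⟨Walk.nil, by simpa using hu⟩

lemma of_adj (h : G.Adj u v) (hu : u ∉ F) (hv : v ∉ F) : ReachAvoiding G F u v :=
  ⟨h.toWalk, by simp [h.support_toWalk, hu, hv]⟩

lemma symm (h : ReachAvoiding G F u v) : ReachAvoiding G F v u := by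
  obtain ⟨p, hp⟩ := h
  exact ⟨p.reverse, fun x hx => hp x (by simpa [Walk.support_reverse] using hx)⟩

lemma trans (h₁ : ReachAvoiding G F u v) (h₂ : ReachAvoiding G F v w) :
    ReachAvoiding G F u w := by
  obtain ⟨p, hp⟩ := h₁
  obtain ⟨q, hq⟩ := h₂
  exact ⟨p.append q, fun x hx => ((Walk.mem_support_append_iff p q).mp hx).elim (hp x) (hq x)⟩

lemma mem_of_adjClosedOutside (hC : AdjClosedOutside G F C) (h : ReachAvoiding G F u v)
    (hu : u ∈ C) : v ∈ C := by
  obtain ⟨p, hp⟩ := h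
  induction p with
  | nil => exact hu
  | cons hadj p ih =>
    simp only [Walk.support_cons, List.mem_cons, forall_eq_or_imp] at hp
    exact ih (hC _ hu _ hadj (hp.2 _ p.start_mem_support)) hp.2

end ReachAvoiding

namespace GraphRay

variable (s : GraphRay G) {k l : ℕ}

lemma exists_tail_notMem (hF : F.Finite) : ∃ N, ∀ n, N ≤ n → s.toFun n ∉ F := by
  obtain ⟨N, hN⟩ := (hF.preimage s.injective.injOn).bddAbove
  exact ⟨N + 1, fun n hn hmem => by have := hN hmem; omega⟩

lemma reachAvoiding_of_le (hkl : k ≤ l) (hk : ∀ n, k ≤ n → s.toFun n ∉ F) :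
    ReachAvoiding G F (s.toFun k) (s.toFun l) := by
  induction l, hkl using Nat.le_induction with
  | base => exact .refl (hk k le_rfl)
  | succ l hkl ih => exact ih.trans (.of_adj (s.adj l) (hk l hkl) (hk (l + 1) (by omega)))

lemma reachAvoiding (hk : ∀ n, k ≤ n → s.toFun n ∉ F) (hl : ∀ n, l ≤ n → s.toFun n ∉ F) :
    ReachAvoiding G F (s.toFun k) (s.toFun l) := by
  rcases le_total k l with h | h
  · exact s.reachAvoiding_of_le h hk
  · exact (s.reachAvoiding_of_le h hl).symm

lemma mem_of_adjClosedOutside (hC : AdjClosedOutside G F C) (hF : ∀ n, k ≤ n → s.toFun n ∉ F)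
    (hk : s.toFun k ∈ C) (n : ℕ) (hn : k ≤ n) : s.toFun n ∈ C :=
  (s.reachAvoiding_of_le hn hF).mem_of_adjClosedOutside hC hk

lemma notMem_of_adjClosedOutside_of_finite (hC : AdjClosedOutside G F C) (hfin : C.Finite)
    (hF : ∀ n, k ≤ n → s.toFun n ∉ F) : s.toFun k ∉ C := by
  intro hk
  refine Set.infinite_of_injective_forall_mem (f := fun j => s.toFun (k + j)) ?_ ?_ hfin
  · intro a b h
    have := s.injective h
    omega
  · exact fun j => s.mem_of_adjClosedOutside hC hF hk _ (by omega)

lemma tailsConnected_self (hF : F.Finite) : TailsConnected G F s.toFun s.toFun := by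
  obtain ⟨N, hN⟩ := s.exists_tail_notMem hF
  exact ⟨N, N, hN, hN, .refl (hN N le_rfl)⟩

end GraphRay

lemma not_dominates_of_adjClosedOutside_of_finite {F : Finset V} {v : V}
    (hC : AdjClosedOutside G F C) (hfin : C.Finite) (hv : v ∈ C) (hvF : v ∉ F)
    (s : GraphRay G) : ¬ Dominates G v s.toFun := by
  intro hdom
  obtain ⟨k, hk, hreach⟩ := hdom F hvF
  exact s.notMem_of_adjClosedOutside_of_finite hC hfin hk (hreach.mem_of_adjClosedOutside hC hv)

lemma not_uTimid_of_forall_notMem (s : GraphRay G) (hs : ∀ n, s.toFun n ∉ U) (k : ℕ) :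
    ¬ UTimid G U (s.toFun k) := by
  intro h
  obtain ⟨F, hFU, hF⟩ := h s
  have hsF : ∀ n, s.toFun n ∉ (F : Set V) := fun n hn => hs n (hFU hn).1
  exact hF k (fun n _ => hsF n) (.refl (hsF k))

namespace TailsConnected

variable {r r' : ℕ → V}

lemma symm (h : TailsConnected G F r r') : TailsConnected G F r' r := by
  obtain ⟨k, k', hk, hk', hreach⟩ := h
  exact ⟨k', k, hk', hk, hreach.symm⟩

lemma trans {s : GraphRay G} (h₁ : TailsConnected G F r s.toFun)
    (h₂ : TailsConnected G F s.toFun r') : TailsConnected G F r r' := by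
  obtain ⟨k₁, l₁, hk₁, hl₁, hreach₁⟩ := h₁
  obtain ⟨l₂, k₂, hl₂, hk₂, hreach₂⟩ := h₂
  exact ⟨k₁, k₂, hk₁, hk₂, hreach₁.trans ((s.reachAvoiding hl₁ hl₂).trans hreach₂)⟩

lemma exists_tail_mem (hC : AdjClosedOutside G F C) (hr : ∀ n, r n ∉ F → r n ∈ C)
    {s : GraphRay G} (h : TailsConnected G F r s.toFun) :
    ∃ k, ∀ n, k ≤ n → s.toFun n ∈ C := by
  obtain ⟨k, k', hk, hk', hreach⟩ := h
  exact ⟨k', s.mem_of_adjClosedOutside hC hk'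
    (hreach.mem_of_adjClosedOutside hC (hr k (hk k le_rfl)))⟩

end TailsConnected

lemma uEquiv_equivalence (U : Set V) : Equivalence (UEquiv G U) where
  refl s _ _ := s.tailsConnected_self (Finset.finite_toSet _)
  symm h F hF := (h F hF).symm
  trans h₁ h₂ F hF := (h₁ F hF).trans (h₂ F hF)

lemma quot_mk_uEquiv_eq_iff {r r' : GraphRay G} :
    Quot.mk (UEquiv G U) r = Quot.mk (UEquiv G U) r' ↔ UEquiv G U r r' :=
  Quot.eq.trans (uEquiv_equivalence U).eqvGen_iff

lemma mk_mem_uBasic_self (U : Set V) (F : Finset V) (s : GraphRay G) :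
    Quot.mk (UEquiv G U) s ∈ uBasic G U F (Quot.mk (UEquiv G U) s) :=
  ⟨s, s, rfl, rfl, s.tailsConnected_self F.finite_toSet⟩

lemma mk_mem_uBasic_of_tailsConnected {F : Finset V} (hF : (F : Set V) ⊆ U) {ε : OmegaU G U}
    {s s' : GraphRay G} (hs : Quot.mk (UEquiv G U) s ∈ uBasic G U F ε)
    (h : TailsConnected G F s.toFun s'.toFun) : Quot.mk (UEquiv G U) s' ∈ uBasic G U F ε := by
  obtain ⟨r, r', hr, hr', hrr'⟩ := hs
  exact ⟨r, s', hr, rfl, hrr'.trans (((quot_mk_uEquiv_eq_iff.mp hr') F hF).trans h)⟩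

lemma tendsto_nhds_mk_of_tailsConnected {ι : Type*} {l : Filter ι} {f : ι → GraphRay G}
    {s : GraphRay G}
    (h : ∀ F : Finset V, (F : Set V) ⊆ U → ∀ᶠ i in l, TailsConnected G F s.toFun (f i).toFun) :
    Tendsto (fun i => Quot.mk (UEquiv G U) (f i)) l
      (nhds (X := OmegaU G U) (Quot.mk _ s)) := by
  refine TopologicalSpace.tendsto_nhds_generateFrom_iff.mpr ?_
  rintro _ ⟨F, hF, ε, rfl⟩ hs
  exact (h F hF).mono fun i hi => mk_mem_uBasic_of_tailsConnected hF hs hi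

end Rays

@[simp] lemma cliqueStar_adj_inl_inr {a : ℕ} {p : ℕ × ℕ} :
    cliqueStar.Adj (Sum.inl a) (Sum.inr p) ↔ a = 0 ∧ p.2 = 0 := Iff.rfl

@[simp] lemma cliqueStar_adj_inr_inr {p q : ℕ × ℕ} :
    cliqueStar.Adj (Sum.inr p) (Sum.inr q) ↔ p.1 = q.1 ∧ (p.2 = q.2 + 1 ∨ q.2 = p.2 + 1) :=
  Iff.rfl

def starRay (i : ℕ) : GraphRay cliqueStar where
  toFun n := Sum.inr (i, n)
  injective a b h := by simpa using h
  adj _ := by simp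

lemma cliqueStar_not_timid_inl (a : ℕ) : ¬ Timid cliqueStar (Sum.inl a) := by
  refine fun h => h cliqueRay fun F haF => ?_
  obtain ⟨N, hN⟩ := cliqueRay.exists_tail_notMem F.finite_toSet
  refine ⟨max N (a + 1), fun n hn => hN n (le_of_max_le_left hn),
    .of_adj ?_ (by exact_mod_cast haF) (hN _ (le_max_left _ _))⟩
  change a ≠ max N (a + 1)
  omega

lemma cliqueStar_adjClosedOutside_starSegment (i n : ℕ) :
    AdjClosedOutside cliqueStar ↑({Sum.inl 0, Sum.inr (i, n + 1)} : Finset (ℕ ⊕ ℕ × ℕ))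
      ((fun m => Sum.inr (i, m)) '' Set.Iic n) := by
  rintro _ ⟨m, hm, rfl⟩ (b | ⟨j, m'⟩) hadj hy
  · obtain ⟨rfl, -⟩ := hadj
    simp at hy
  · obtain ⟨rfl, h⟩ := hadj
    have : m' ≠ n + 1 := by
      rintro rfl
      simp at hy
    refine ⟨m', ?_, rfl⟩
    simp only [Set.mem_Iic] at hm ⊢
    omega

lemma cliqueStar_timid_inr (p : ℕ × ℕ) : Timid cliqueStar (Sum.inr p) := by
  obtain ⟨i, n⟩ := p
  exact not_dominates_of_adjClosedOutside_of_finite (cliqueStar_adjClosedOutside_starSegment i n)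
    ((Set.finite_Iic n).image _) ⟨n, Set.mem_Iic.mpr le_rfl, rfl⟩ (by simp)

theorem timidSet_cliqueStar : timidSet cliqueStar = Set.range Sum.inr := by
  ext (a | p)
  · simpa [timidSet] using cliqueStar_not_timid_inl a
  · simpa [timidSet] using cliqueStar_timid_inr p

theorem timidBoundary_cliqueStar_subset :
    timidBoundary cliqueStar (timidSet cliqueStar) ⊆ timidSet cliqueStar := by
  rintro (a | p) ⟨ha, -⟩
  · exact absurd ha (not_uTimid_of_forall_notMem cliqueRay
      (by simp [timidSet_cliqueStar, cliqueRay]) a)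
  · exact cliqueStar_timid_inr p

lemma cliqueStar_adjClosedOutside_clique :
    AdjClosedOutside cliqueStar ↑({Sum.inl 0} : Finset (ℕ ⊕ ℕ × ℕ)) (Sum.inl '' {a | a ≠ 0}) := by
  rintro _ ⟨a, ha, rfl⟩ (b | q) hadj hy
  · exact ⟨b, by simpa using hy, rfl⟩
  · exact absurd hadj.1 ha

lemma cliqueStar_tailsConnected_cliqueRay_of_tail {s : GraphRay cliqueStar} {k : ℕ}
    (hs : ∀ n, k ≤ n → s.toFun n ∈ Set.range Sum.inl) (F : Finset (ℕ ⊕ ℕ × ℕ)) :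
    TailsConnected cliqueStar F s.toFun cliqueRay.toFun := by
  obtain ⟨N, hN⟩ := s.exists_tail_notMem F.finite_toSet
  obtain ⟨M, hM⟩ := cliqueRay.exists_tail_notMem F.finite_toSet
  obtain ⟨a, ha⟩ := hs (max N k) (le_max_right _ _)
  refine ⟨max N k, max M (a + 1), fun n hn => hN n (le_of_max_le_left hn),
    fun n hn => hM n (le_of_max_le_left hn), .of_adj ?_ (hN _ (le_max_left _ _))
    (hM _ (le_max_left _ _))⟩
  rw [← ha]
  change a ≠ max M (a + 1)
  omega

theorem uBasic_cliqueStar_cliqueRay :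
    uBasic cliqueStar Set.univ {Sum.inl 0} (Quot.mk (UEquiv cliqueStar Set.univ) cliqueRay) =
      {Quot.mk (UEquiv cliqueStar Set.univ) cliqueRay} := by
  refine Set.Subset.antisymm ?_ (Set.singleton_subset_iff.mpr (mk_mem_uBasic_self _ _ _))
  rintro _ ⟨r, s, hr, rfl, hrs⟩
  have hcs := ((quot_mk_uEquiv_eq_iff.mp hr) {Sum.inl 0} (Set.subset_univ _)).symm.trans hrs
  obtain ⟨k, hk⟩ := hcs.exists_tail_mem cliqueStar_adjClosedOutside_clique
    fun n hn => ⟨n, by simpa [cliqueRay] using hn, rfl⟩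
  exact quot_mk_uEquiv_eq_iff.mpr fun F _ => cliqueStar_tailsConnected_cliqueRay_of_tail
    (fun n hn => Set.image_subset_range _ _ (hk n hn)) F

lemma cliqueStar_adjClosedOutside_starRay_tail (i : ℕ) :
    AdjClosedOutside cliqueStar ↑({Sum.inr (i, 0)} : Finset (ℕ ⊕ ℕ × ℕ))
      (Set.range fun m => Sum.inr (i, m + 1)) := by
  rintro _ ⟨m, rfl⟩ (b | ⟨j, _ | m'⟩) hadj hy
  · exact absurd hadj.2 m.succ_ne_zero
  · obtain ⟨rfl, -⟩ := hadj
    simp at hy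
  · obtain ⟨rfl, -⟩ := hadj
    exact ⟨m', rfl⟩

lemma UEquiv.starRay_tail {i : ℕ} {s : GraphRay cliqueStar}
    (h : UEquiv cliqueStar (timidSet cliqueStar) (starRay i) s) :
    ∃ k, ∀ n, k ≤ n → s.toFun n ∈ Set.range fun m => Sum.inr (i, m + 1) := by
  refine (h {Sum.inr (i, 0)} (by simp [timidSet_cliqueStar])).exists_tail_mem
    (cliqueStar_adjClosedOutside_starRay_tail i) fun n hn => ?_
  cases n with
  | zero => simp [starRay] at hn
  | succ m => exact ⟨m, rfl⟩

lemma starEnd_injective :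
    Function.Injective fun i => Quot.mk (UEquiv cliqueStar (timidSet cliqueStar)) (starRay i) := by
  intro i j h
  obtain ⟨k, hk⟩ := (quot_mk_uEquiv_eq_iff.mp h).starRay_tail
  obtain ⟨m, hm⟩ := hk k le_rfl
  simp only [starRay, Sum.inr.injEq, Prod.mk.injEq] at hm
  exact hm.1

lemma starEnd_ne_cliqueEnd (i : ℕ) :
    Quot.mk (UEquiv cliqueStar (timidSet cliqueStar)) (starRay i) ≠ Quot.mk _ cliqueRay := by
  intro h
  obtain ⟨k, hk⟩ := (quot_mk_uEquiv_eq_iff.mp h).starRay_tail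
  obtain ⟨m, hm⟩ := hk k le_rfl
  simp [cliqueRay] at hm

lemma cliqueStar_tailsConnected_starRay {F : Set (ℕ ⊕ ℕ × ℕ)} (hF : F ⊆ Set.range Sum.inr)
    {i : ℕ} (hi : ∀ m, Sum.inr (i, m) ∉ F) :
    TailsConnected cliqueStar F cliqueRay.toFun (starRay i).toFun := by
  have hinl : ∀ a, Sum.inl a ∉ F := fun a ha => by simpa using hF ha
  exact ⟨0, 0, fun n _ => hinl n, fun n _ => hi n, .of_adj (by simp [cliqueRay, starRay])
    (hinl 0) (hi 0)⟩

lemma eventually_tailsConnected_cliqueRay_starRay (F : Finset (ℕ ⊕ ℕ × ℕ))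
    (hF : (F : Set (ℕ ⊕ ℕ × ℕ)) ⊆ timidSet cliqueStar) :
    ∀ᶠ i in cofinite, TailsConnected cliqueStar F cliqueRay.toFun (starRay i).toFun := by
  rw [timidSet_cliqueStar] at hF
  have hfin : {i | ∃ m, Sum.inr (i, m) ∈ F}.Finite :=
    (F.finite_toSet.image (Sum.elim (fun _ => 0) Prod.fst)).subset
      fun i ⟨m, hm⟩ => ⟨_, hm, rfl⟩
  exact hfin.eventually_cofinite_notMem.mono fun i hi =>
    cliqueStar_tailsConnected_starRay hF fun m hm => hi ⟨m, hm⟩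

theorem infinite_starEnds_mem_uBasic (F : Finset (ℕ ⊕ ℕ × ℕ))
    (hF : (F : Set (ℕ ⊕ ℕ × ℕ)) ⊆ timidSet cliqueStar) :
    {ξ | ξ ∈ uBasic cliqueStar (timidSet cliqueStar) F
          (Quot.mk (UEquiv cliqueStar (timidSet cliqueStar)) cliqueRay) ∧
      ∃ s : GraphRay cliqueStar, (∀ n, ∃ p, s.toFun n = Sum.inr p) ∧
        Quot.mk (UEquiv cliqueStar (timidSet cliqueStar)) s = ξ}.Infinite := by
  have hmem := (eventually_tailsConnected_cliqueRay_starRay F hF).mono fun i hi =>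
    (⟨cliqueRay, starRay i, rfl, rfl, hi⟩ : Quot.mk _ (starRay i) ∈ uBasic cliqueStar
      (timidSet cliqueStar) F (Quot.mk _ cliqueRay))
  refine ((Set.infinite_image_iff starEnd_injective.injOn).mpr
    (frequently_cofinite_iff_infinite.mp hmem.frequently)).mono ?_
  rintro _ ⟨i, hi, rfl⟩
  exact ⟨hi, starRay i, fun n => ⟨(i, n), rfl⟩, rfl⟩

theorem tendsto_starEnd_cliqueEnd :
    Tendsto (fun i => Quot.mk _ (starRay i)) cofinite
      (nhds (X := OmegaU cliqueStar (timidSet cliqueStar)) (Quot.mk _ cliqueRay)) :=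
  tendsto_nhds_mk_of_tailsConnected eventually_tailsConnected_cliqueRay_starRay

theorem not_isOpen_singleton_cliqueEnd :
    ¬ IsOpen ({Quot.mk _ cliqueRay} : Set (OmegaU cliqueStar (timidSet cliqueStar))) := fun ho =>
  let ⟨i, hi⟩ := (tendsto_starEnd_cliqueEnd.eventually_mem (ho.mem_nhds rfl)).exists
  starEnd_ne_cliqueEnd i hi

/-- For `G = K ∪ S` (an infinite clique `K` with a star `S` of
infinitely many rays centered at `v₀ = Sum.inl 0 ∈ V(K)`) and a ray `r` inside `K`:
`t(G) = V(G) ∖ V(K)`, `∂t_{t(G)} ⊆ t(G)`, the singleton `{[r]}` is the basic open set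
`Ω({v₀}, [r])` and hence open in `Ω(G)`, yet its image `{[r]_{t(G)}}` under the canonical
map `π_Ω` is not open in `Ω_t(G)`, since every basic open set `Ω_t(F, [r]_{t(G)})` contains
infinitely many timid-ends of rays of `S`. In particular `π_Ω` is not an open map. -/
theorem cliqueStar_piOmega_not_openMap :
    timidSet cliqueStar = Set.range Sum.inr ∧
    timidBoundary cliqueStar (timidSet cliqueStar) ⊆ timidSet cliqueStar ∧
    uBasic cliqueStar (Set.univ : Set (ℕ ⊕ (ℕ × ℕ))) {Sum.inl 0}
        (Quot.mk (UEquiv cliqueStar Set.univ) cliqueRay) =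
      {Quot.mk (UEquiv cliqueStar Set.univ) cliqueRay} ∧
    IsOpen ({Quot.mk (UEquiv cliqueStar Set.univ) cliqueRay} :
      Set (OmegaU cliqueStar Set.univ)) ∧
    piOmega cliqueStar '' {Quot.mk (UEquiv cliqueStar Set.univ) cliqueRay} =
      {Quot.mk (UEquiv cliqueStar (timidSet cliqueStar)) cliqueRay} ∧
    (∀ F : Finset (ℕ ⊕ (ℕ × ℕ)), (F : Set (ℕ ⊕ (ℕ × ℕ))) ⊆ timidSet cliqueStar →
      {ξ | ξ ∈ uBasic cliqueStar (timidSet cliqueStar) F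
            (Quot.mk (UEquiv cliqueStar (timidSet cliqueStar)) cliqueRay) ∧
        ∃ s : GraphRay cliqueStar, (∀ n, ∃ p, s.toFun n = Sum.inr p) ∧
          Quot.mk (UEquiv cliqueStar (timidSet cliqueStar)) s = ξ}.Infinite) ∧
    ¬ IsOpen ({Quot.mk (UEquiv cliqueStar (timidSet cliqueStar)) cliqueRay} :
      Set (OmegaU cliqueStar (timidSet cliqueStar))) ∧
    ¬ IsOpenMap (piOmega cliqueStar) := by
  have hopen : IsOpen ({Quot.mk _ cliqueRay} : Set (OmegaU cliqueStar Set.univ)) := by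
    rw [← uBasic_cliqueStar_cliqueRay]
    exact TopologicalSpace.isOpen_generateFrom_of_mem ⟨{Sum.inl 0}, Set.subset_univ _, _, rfl⟩
  have himage : piOmega cliqueStar '' {Quot.mk (UEquiv cliqueStar Set.univ) cliqueRay} =
      {Quot.mk (UEquiv cliqueStar (timidSet cliqueStar)) cliqueRay} :=
    Set.image_singleton
  refine ⟨timidSet_cliqueStar, timidBoundary_cliqueStar_subset, uBasic_cliqueStar_cliqueRay,
    hopen, himage, infinite_starEnds_mem_uBasic, not_isOpen_singleton_cliqueEnd, fun h => ?_⟩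
  exact not_isOpen_singleton_cliqueEnd (himage ▸ h _ hopen)
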